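/- In the ring of formal power series in t over the symmetric functions, with θ(t) = ∑_{k ≥ 1, k odd} t^k p_k/k, the odd and even parts of E(t) satisfy E_odd(t)·(exp(2θ(t)) + 1) = E_even(t)·(exp(2θ(t)) − 1), where E_odd(t) = ∑_{k≥0} t^{2k+1} e_{2k+1} and E_even(t) = ∑_{k≥0} t^{2k} e_{2k}. Equivalently, E_odd/E_even = tanh(θ(t)). -/

import Mathlib

open Classical

/-- The complete homogeneous symmetric function of degree `i`, as a formal power
series in countably many variables: every monomial of total degree `i` appears
with coefficient `1`. -/
noncomputable def hSym (i : ℕ) : MvPowerSeries ℕ ℚ :=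
  fun d => if (d.sum fun _ k => k) = i then 1 else 0

/-- The elementary symmetric function of degree `i`: every squarefree monomial
of total degree `i` appears with coefficient `1`. -/
noncomputable def eSym (i : ℕ) : MvPowerSeries ℕ ℚ :=
  fun d => if (∀ j ∈ d.support, d j = 1) ∧ d.support.card = i then 1 else 0
/-- The power sum symmetric function `p k`. -/
noncomputable def pSym (k : ℕ) : MvPowerSeries ℕ ℚ :=
  fun d => if ∃ j, d = Finsupp.single j k then 1 else 0

/-- `E_odd(t) = ∑_{k≥0} t^{2k+1} e_{2k+1}`. -/
noncomputable def EoddSer : PowerSeries (MvPowerSeries ℕ ℚ) :=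
  PowerSeries.mk fun n => if Odd n then eSym n else 0

/-- `E_even(t) = ∑_{k≥0} t^{2k} e_{2k}`. -/
noncomputable def EevenSer : PowerSeries (MvPowerSeries ℕ ℚ) :=
  PowerSeries.mk fun n => if Even n then eSym n else 0

/-- The exponential of a power series: for `F` with zero constant term this is
`∑_{n≥0} F^n / n!`, computed coefficientwise. -/
noncomputable def expPS (F : PowerSeries (MvPowerSeries ℕ ℚ)) :
    PowerSeries (MvPowerSeries ℕ ℚ) :=
  PowerSeries.mk fun d =>
    ∑ n ∈ Finset.range (d + 1), ((n.factorial : ℚ)⁻¹) • (PowerSeries.coeff d (F ^ n))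

/-- `θ(t) = ∑_{k odd} t^k p_k / k`. -/
noncomputable def thetaSer : PowerSeries (MvPowerSeries ℕ ℚ) :=
  PowerSeries.mk fun k => if Odd k then ((k : ℚ)⁻¹) • pSym k else 0

/-!
Newton's identity `(n + 1) e_{n+1} = ∑_{i ≤ n} (-1)^i p_{i+1} e_{n-i}` says that
`E(t) = ∑ e_n t^n` solves the linear equation `E' = P E` with `P(t) = ∑ (-1)^k p_{k+1} t^k`.
Then `E(-t)` solves `E(-t)' = -P(-t) E(-t)`, and since `2θ' = P(t) + P(-t)`, the series
`exp(2θ(t)) E(-t)` solves `F' = P F` as well; both have constant term `1`, so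
`exp(2θ(t)) E(-t) = E(t)`. Writing `E(±t) = E_even(t) ± E_odd(t)` gives the claim.
Newton's identity itself is checked on the coefficient of each monomial `x^d`, one variable
`x_j` of `d` at a time.
-/

section Newton

open MvPowerSeries Finset
open Finsupp (single)

theorem coeff_eSym (d : ℕ →₀ ℕ) (r : ℕ) :
    coeff d (eSym r) = if (∀ j ∈ d.support, d j = 1) ∧ d.support.card = r then 1 else 0 :=
  rfl

theorem coeff_eSym_add_single {d : ℕ →₀ ℕ} {j : ℕ} (hj : d j = 0) (k r : ℕ) :
    coeff (d + single j k) (eSym r) =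
      if k ≤ 1 ∧ k ≤ r then coeff d (eSym (r - k)) else 0 := by
  have hjs : j ∉ d.support := by simpa using hj
  match k with
  | 0 => simp
  | 1 =>
    have hsupp : (d + single j 1).support = insert j d.support := by
      rw [Finsupp.support_add_eq (by simpa using hjs), Finsupp.support_single _ one_ne_zero,
        Finset.union_comm, ← Finset.insert_eq]
    have hvals : (∀ i ∈ insert j d.support, (d + single j 1 : ℕ →₀ ℕ) i = 1) ↔
        ∀ i ∈ d.support, d i = 1 := by
      rw [Finset.forall_mem_insert]
      simp only [Finsupp.coe_add, Pi.add_apply, hj, Finsupp.single_eq_same, zero_add, true_and]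
      refine forall₂_congr fun i hi => ?_
      rw [Finsupp.single_eq_of_ne (ne_of_mem_of_not_mem hi hjs), add_zero]
    simp only [coeff_eSym, hsupp, hvals, Finset.card_insert_of_notMem hjs]
    split_ifs <;> grind
  | k + 2 =>
    rw [coeff_eSym, if_neg, if_neg (by omega)]
    rintro ⟨h, -⟩
    simpa [hj] using h j (by simp)

/-- Writing `d = d' + single j m` with `d' j = 0`, only the indices `i` with
`m - (i + 1) ∈ {0, 1}` contribute, and for `m ≥ 2` these two contributions cancel. -/
theorem sum_range_neg_one_pow_mul_coeff_eSym_sub_single {d : ℕ →₀ ℕ} {j : ℕ}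
    (hj : j ∈ d.support) (n : ℕ) :
    ∑ i ∈ range (n + 1), (-1 : ℚ) ^ i *
        (if i + 1 ≤ d j then coeff (d - single j (i + 1)) (eSym (n - i)) else 0) =
      coeff d (eSym (n + 1)) := by
  set m := d j with hm
  have hm0 : 1 ≤ m := Nat.one_le_iff_ne_zero.mpr (Finsupp.mem_support_iff.mp hj)
  have hsub : ∀ k ≤ m, d - single j k = d.erase j + single j (m - k) := fun k hk => by
    ext i
    by_cases hij : i = j
    · subst hij; simp [hm]
    · simp [hij, Finsupp.erase_ne, Finsupp.single_eq_of_ne]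
  have herase : (d.erase j) j = 0 := Finsupp.erase_same
  set c := coeff (d.erase j) (eSym (n + 1 - m))
  have hterm : ∀ i ∈ range (n + 1),
      (-1 : ℚ) ^ i * (if i + 1 ≤ m then coeff (d - single j (i + 1)) (eSym (n - i)) else 0) =
        if i + 1 ≤ m ∧ m ≤ i + 2 ∧ m ≤ n + 1 then (-1) ^ i * c else 0 := by
    intro i hi
    have hi := mem_range.mp hi
    by_cases h : i + 1 ≤ m
    · rw [if_pos h, hsub _ h, coeff_eSym_add_single herase]
      split_ifs with h₁ h₂ h₂
      · rw [show n - i - (m - (i + 1)) = n + 1 - m by omega]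
      · omega
      · omega
      · rw [mul_zero]
    · simp [h]
  rw [sum_congr rfl hterm]
  have hd : d = d.erase j + single j m := by simpa using hsub 0 (Nat.zero_le _)
  conv_rhs => rw [hd, coeff_eSym_add_single herase]
  rcases hm0.eq_or_lt with hm1 | hm2
  · rw [if_pos (by omega), ← hm1]
    refine (sum_eq_single_of_mem 0 (by simp) fun i _ hi => if_neg (by omega)).trans ?_
    simp [c, ← hm1]
  · rw [if_neg (by omega)]
    by_cases hmn : m ≤ n + 1
    · rw [sum_eq_add_of_mem (m - 2) (m - 1) (by simp; omega) (by simp; omega) (by omega)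
        fun i _ hi => if_neg (by omega), if_pos (by omega), if_pos (by omega),
        show m - 1 = m - 2 + 1 by omega, pow_succ]
      ring
    · exact sum_eq_zero fun i _ => if_neg (by omega)

theorem MvPowerSeries.coeff_mul_congr_left {σ R : Type*} [CommSemiring R] {d : σ →₀ ℕ}
    {φ ψ : MvPowerSeries σ R} (h : ∀ a ≤ d, coeff a φ = coeff a ψ)
    (g : MvPowerSeries σ R) :
    coeff d (φ * g) = coeff d (ψ * g) := by
  rw [coeff_mul, coeff_mul]
  refine sum_congr rfl fun p hp => ?_
  rw [h p.1 (mem_antidiagonal.mp hp ▸ le_self_add)]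

theorem coeff_pSym_mul {m : ℕ} (hm : m ≠ 0) (g : MvPowerSeries ℕ ℚ) (d : ℕ →₀ ℕ) :
    coeff d (pSym m * g) =
      ∑ j ∈ d.support, if m ≤ d j then coeff (d - single j m) g else 0 := by
  have hagree : ∀ a ≤ d,
      coeff a (pSym m) = coeff a (∑ j ∈ d.support, monomial (single j m) (1 : ℚ)) := by
    intro a ha
    simp only [map_sum, coeff_monomial]
    change (if ∃ j, a = single j m then 1 else 0) = _
    split_ifs with h
    · obtain ⟨j, rfl⟩ := h
      have hj : j ∈ d.support := by
        rw [Finsupp.single_le_iff] at ha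
        exact Finsupp.mem_support_iff.mpr (by omega)
      rw [sum_eq_single_of_mem j hj fun i _ hij => if_neg ?_, if_pos rfl]
      exact fun h => hij ((Finsupp.single_left_inj hm).mp h).symm
    · exact (sum_eq_zero fun j _ => if_neg fun h' => h ⟨j, h'⟩).symm
  rw [coeff_mul_congr_left hagree, Finset.sum_mul, map_sum]
  refine sum_congr rfl fun j _ => ?_
  simp only [coeff_monomial_mul, one_mul, Finsupp.single_le_iff]

theorem smul_eSym_succ_eq_sum (n : ℕ) :
    ((n : ℚ) + 1) • eSym (n + 1) =
      ∑ i ∈ range (n + 1), (-1 : ℚ) ^ i • (pSym (i + 1) * eSym (n - i)) := by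
  ext d
  have hcard : (d.support.card : ℚ) * coeff d (eSym (n + 1)) =
      ((n : ℚ) + 1) * coeff d (eSym (n + 1)) := by
    rw [coeff_eSym]
    split_ifs with h
    · rw [h.2]; push_cast; ring
    · simp
  simp only [coeff_smul, map_sum, coeff_pSym_mul (Nat.succ_ne_zero _), mul_sum]
  rw [sum_comm, sum_congr rfl fun j hj => sum_range_neg_one_pow_mul_coeff_eSym_sub_single hj n,
    sum_const, nsmul_eq_mul, hcard]

end Newton

section GeneratingSeries

open PowerSeries Finset

theorem PowerSeries.eq_of_derivative_eq_mul {A : Type*} [CommRing A] [IsAddTorsionFree A]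
    {P f g : A⟦X⟧} (hf : d⁄dX A f = P * f) (hg : d⁄dX A g = P * g)
    (h0 : constantCoeff f = constantCoeff g) : f = g := by
  ext n
  induction n using Nat.strong_induction_on with
  | _ n ih =>
  cases n with
  | zero => simpa using h0
  | succ n =>
    have hP : coeff n (P * f) = coeff n (P * g) := by
      rw [coeff_mul, coeff_mul]
      refine sum_congr rfl fun p hp => ?_
      rw [ih p.2 (by have := mem_antidiagonal.mp hp; omega)]
    have hcoeff : (n + 1) • coeff (n + 1) f = (n + 1) • coeff (n + 1) g := by
      simp only [nsmul_eq_mul, Nat.cast_succ, mul_comm _ (coeff (n + 1) _)]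
      rw [← coeff_derivative, ← coeff_derivative, hf, hg, hP]
    exact nsmul_right_injective n.succ_ne_zero hcoeff

theorem PowerSeries.derivative_rescale {R : Type*} [CommSemiring R] (a : R) (f : R⟦X⟧) :
    d⁄dX R (rescale a f) = a • rescale a (d⁄dX R f) := by
  ext n
  simp only [coeff_derivative, coeff_rescale, coeff_smul, smul_eq_mul, pow_succ]
  ring

theorem PowerSeries.derivative_sum_range_succ_inv_factorial_smul_pow {A : Type*} [CommRing A]
    [Algebra ℚ A] (F : A⟦X⟧) (N : ℕ) :
    d⁄dX A (∑ n ∈ range (N + 1), (n.factorial : ℚ)⁻¹ • F ^ n) =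
      d⁄dX A F * ∑ n ∈ range N, (n.factorial : ℚ)⁻¹ • F ^ n := by
  rw [sum_range_succ', map_add, pow_zero, map_sum, mul_sum]
  simp only [map_rat_smul, derivative_pow, derivative_one, smul_zero, add_zero,
    Nat.add_sub_cancel]
  refine sum_congr rfl fun n _ => ?_
  have hfac : ((n + 1).factorial : ℚ)⁻¹ * (n + 1 : ℕ) = (n.factorial : ℚ)⁻¹ := by
    rw [Nat.factorial_succ, Nat.cast_mul, mul_inv, mul_right_comm,
      inv_mul_cancel₀ (by positivity), one_mul]
  rw [mul_assoc, ← nsmul_eq_mul, ← Nat.cast_smul_eq_nsmul ℚ, smul_smul, hfac, mul_smul_comm,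
    mul_comm]

theorem smul_eq_mul_natCast_add_one {A : Type*} [Ring A] [Algebra ℚ A] (x : A) (n : ℕ) :
    ((n : ℚ) + 1) • x = x * ((n : A) + 1) := by
  rw [Algebra.smul_def, Algebra.commutes, map_add, map_natCast, map_one]

theorem X_pow_dvd_expPS_sub {F : PowerSeries (MvPowerSeries ℕ ℚ)} (hF : constantCoeff F = 0)
    (N : ℕ) : X ^ N ∣ expPS F - ∑ n ∈ range N, (n.factorial : ℚ)⁻¹ • F ^ n := by
  rw [X_pow_dvd_iff]
  intro m hm
  have hvanish : ∀ n, m < n → coeff m (F ^ n) = 0 := fun n hn =>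
    X_pow_dvd_iff.mp (pow_dvd_pow_of_dvd (X_dvd_iff.mpr hF) n) m hn
  rw [map_sub, sub_eq_zero, expPS, coeff_mk, map_sum]
  refine sum_subset (range_subset_range.mpr hm) fun n _ hn => ?_
  rw [hvanish n (by simpa using hn), smul_zero]

theorem constantCoeff_expPS (F : PowerSeries (MvPowerSeries ℕ ℚ)) :
    constantCoeff (expPS F) = 1 := by
  rw [← coeff_zero_eq_constantCoeff_apply]
  simp [expPS]

theorem derivative_expPS {F : PowerSeries (MvPowerSeries ℕ ℚ)} (hF : constantCoeff F = 0) :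
    d⁄dX (MvPowerSeries ℕ ℚ) (expPS F) = d⁄dX (MvPowerSeries ℕ ℚ) F * expPS F := by
  ext k : 1
  have hhead : coeff (k + 1) (expPS F) =
      coeff (k + 1) (∑ n ∈ range (k + 2), (n.factorial : ℚ)⁻¹ • F ^ n) := by
    rw [← sub_eq_zero, ← map_sub]
    exact X_pow_dvd_iff.mp (X_pow_dvd_expPS_sub hF (k + 2)) (k + 1) (by omega)
  have htail : coeff k (d⁄dX (MvPowerSeries ℕ ℚ) F *
      (expPS F - ∑ n ∈ range (k + 1), (n.factorial : ℚ)⁻¹ • F ^ n)) = 0 :=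
    X_pow_dvd_iff.mp ((X_pow_dvd_expPS_sub hF (k + 1)).mul_left _) k (Nat.lt_succ_self k)
  rw [mul_sub, map_sub, sub_eq_zero] at htail
  rw [htail, ← derivative_sum_range_succ_inv_factorial_smul_pow, coeff_derivative,
    coeff_derivative, hhead]

noncomputable def ESer : PowerSeries (MvPowerSeries ℕ ℚ) :=
  PowerSeries.mk eSym

noncomputable def altPowerSumSer : PowerSeries (MvPowerSeries ℕ ℚ) :=
  PowerSeries.mk fun k => (-1 : ℚ) ^ k • pSym (k + 1)

theorem derivative_ESer : d⁄dX (MvPowerSeries ℕ ℚ) ESer = altPowerSumSer * ESer := by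
  ext n : 1
  rw [coeff_derivative, ESer, coeff_mk, ← smul_eq_mul_natCast_add_one, smul_eSym_succ_eq_sum,
    coeff_mul, Nat.sum_antidiagonal_eq_sum_range_succ_mk]
  refine sum_congr rfl fun i _ => ?_
  rw [altPowerSumSer, coeff_mk, coeff_mk, smul_mul_assoc]

theorem derivative_two_smul_thetaSer :
    d⁄dX (MvPowerSeries ℕ ℚ) (2 • thetaSer) =
      altPowerSumSer + rescale (-1) altPowerSumSer := by
  ext k : 1
  rw [coeff_derivative, ← smul_eq_mul_natCast_add_one, map_nsmul, thetaSer, coeff_mk, map_add,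
    coeff_rescale, altPowerSumSer, coeff_mk]
  rcases Nat.even_or_odd k with hk | hk
  · rw [if_pos hk.add_one, hk.neg_one_pow, hk.neg_one_pow, one_smul, one_mul, smul_comm,
      smul_smul, Nat.cast_succ, mul_inv_cancel₀ (Nat.cast_add_one_ne_zero k), one_smul, two_nsmul]
  · rw [if_neg (Nat.not_odd_iff_even.mpr hk.add_one), hk.neg_one_pow, hk.neg_one_pow,
      smul_zero, smul_zero, neg_one_mul, neg_one_smul, neg_neg, neg_add_cancel]

theorem EoddSer_add_EevenSer : EoddSer + EevenSer = ESer := by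
  ext n : 1
  rw [map_add, EoddSer, EevenSer, ESer, coeff_mk, coeff_mk, coeff_mk]
  rcases Nat.even_or_odd n with hn | hn
  · rw [if_pos hn, if_neg (Nat.not_odd_iff_even.mpr hn), zero_add]
  · rw [if_pos hn, if_neg (Nat.not_even_iff_odd.mpr hn), add_zero]

theorem EevenSer_sub_EoddSer : EevenSer - EoddSer = rescale (-1) ESer := by
  ext n : 1
  rw [map_sub, EoddSer, EevenSer, coeff_rescale, ESer, coeff_mk, coeff_mk, coeff_mk]
  rcases Nat.even_or_odd n with hn | hn
  · rw [if_pos hn, if_neg (Nat.not_odd_iff_even.mpr hn), hn.neg_one_pow, one_mul, sub_zero]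
  · rw [if_pos hn, if_neg (Nat.not_even_iff_odd.mpr hn), hn.neg_one_pow, neg_one_mul, zero_sub]

theorem expPS_two_smul_thetaSer_mul_rescale_ESer :
    expPS (2 • thetaSer) * rescale (-1) ESer = ESer := by
  have hθ : constantCoeff (2 • thetaSer) = 0 := by
    rw [← coeff_zero_eq_constantCoeff_apply, map_nsmul, thetaSer, coeff_mk, if_neg (by simp),
      smul_zero]
  have : IsAddTorsionFree (MvPowerSeries ℕ ℚ) := .of_module_rat _
  refine eq_of_derivative_eq_mul (P := altPowerSumSer) ?_ derivative_ESer ?_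
  · rw [Derivation.leibniz, derivative_expPS hθ, derivative_rescale, derivative_ESer, map_mul,
      derivative_two_smul_thetaSer, smul_eq_mul, smul_eq_mul, neg_one_smul]
    ring
  · rw [map_mul, constantCoeff_expPS, ← coeff_zero_eq_constantCoeff_apply,
      ← coeff_zero_eq_constantCoeff_apply, coeff_rescale, pow_zero, one_mul, one_mul]

end GeneratingSeries

/-- `E_odd(t)·(exp(2θ(t)) + 1) = E_even(t)·(exp(2θ(t)) − 1)`, i.e.
`E_odd/E_even = tanh(θ(t))`. -/
theorem Eodd_Eeven_tanh :
    EoddSer * (expPS (2 • thetaSer) + 1) = EevenSer * (expPS (2 • thetaSer) - 1) := by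
  have h := expPS_two_smul_thetaSer_mul_rescale_ESer
  rw [← EevenSer_sub_EoddSer, ← EoddSer_add_EevenSer] at h
  linear_combination -h
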